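/- arXiv:1909.09642 — 5 statements merged into one kernel-verified Lean document; each statement's English description precedes it below -/
import Mathlib

section
/- Let q = p^f for a prime p and positive integer f. If q - 1 = 2^c for some nonnegative integer c and q + 1 = 2^a * 3^b for a positive integer a and nonnegative integer b, then q = 3, q = 5, or q = 17. -/
theorem stmt_0 (p f a b c q : ℕ) (hp : p.Prime) (hf : 1 ≤ f) (hq : q = p ^ f)
    (ha : 1 ≤ a) (h1 : q - 1 = 2 ^ c) (h2 : q + 1 = 2 ^ a * 3 ^ b) :
    q = 3 ∨ q = 5 ∨ q = 17 := by
  have hc1 : 1 ≤ 2 ^ c := Nat.one_le_two_pow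
  have hq1 : q = 2 ^ c + 1 := by omega
  have h2' : 2 ^ c + 2 = 2 ^ a * 3 ^ b := by omega
  -- rule out c = 0
  have hc0 : c ≠ 0 := by
    rintro rfl
    have hd : (2:ℕ) ∣ 2 ^ a * 3 ^ b :=
      Dvd.dvd.mul_right (dvd_pow_self 2 (by omega : a ≠ 0)) _
    simp at h2'
    omega
  -- rule out c ≥ 5
  have hc5 : c ≤ 4 := by
    by_contra hbig
    push_neg at hbig
    -- a = 1 since 4 ∤ 2^c + 2
    have hcdecomp : 2 ^ c = 4 * 2 ^ (c - 2) := by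
      rw [show (4:ℕ) = 2 ^ 2 by norm_num, ← pow_add]
      congr 1; omega
    have ha1 : a = 1 := by
      by_contra ha2
      have ha2' : 2 ≤ a := by omega
      have : (4:ℕ) ∣ 2 ^ a := by
        rw [show (4:ℕ) = 2 ^ 2 by norm_num]
        exact pow_dvd_pow 2 ha2'
      have h4 : (4:ℕ) ∣ 2 ^ a * 3 ^ b := this.mul_right _
      omega
    subst ha1
    -- 3^b = 2^(c-1) + 1 = 16 * 2^m + 1
    set m := c - 5 with hm
    have hcm : c = m + 5 := by omega
    have hkey : 3 ^ b = 16 * 2 ^ m + 1 := by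
      have : 2 ^ c = 2 * (16 * 2 ^ m) := by
        rw [hcm]; ring
      omega
    -- 3^b ≡ 3^(b % 4) [MOD 16]
    have hb4 : 3 ^ b ≡ 3 ^ (b % 4) [MOD 16] := by
      conv_lhs => rw [show b = 4 * (b / 4) + b % 4 by omega]
      rw [pow_add, pow_mul]
      calc (3 ^ 4) ^ (b / 4) * 3 ^ (b % 4)
          ≡ 1 ^ (b / 4) * 3 ^ (b % 4) [MOD 16] :=
            (Nat.ModEq.pow _ (by decide : (3:ℕ)^4 ≡ 1 [MOD 16])).mul_right _
        _ = 3 ^ (b % 4) := by rw [one_pow, one_mul]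
    have hmod1 : 3 ^ b % 16 = 1 := by
      rw [hkey]; omega
    have hr : 3 ^ (b % 4) % 16 = 1 := by
      have := hb4.symm
      unfold Nat.ModEq at this
      omega
    have hb0 : b % 4 = 0 := by
      have hlt : b % 4 < 4 := Nat.mod_lt _ (by norm_num)
      interval_cases h : b % 4
      · rfl
      all_goals norm_num at hr
    -- so b = 4k, 3^b = 81^k ≡ 1 [MOD 5]
    have hbk : b = 4 * (b / 4) := by omega
    have h5 : 3 ^ b ≡ 1 [MOD 5] := by
      rw [hbk, pow_mul]
      calc (3 ^ 4) ^ (b / 4) ≡ 1 ^ (b / 4) [MOD 5] :=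
            Nat.ModEq.pow _ (by decide : (3:ℕ)^4 ≡ 1 [MOD 5])
        _ = 1 := one_pow _
    have h5' : 3 ^ b % 5 = 1 := by
      unfold Nat.ModEq at h5
      simpa using h5
    have hdvd : (5:ℕ) ∣ 16 * 2 ^ m := by
      omega
    have hdvd2 : (5:ℕ) ∣ 2 ^ (m + 4) := by
      have : 16 * 2 ^ m = 2 ^ (m + 4) := by ring
      rwa [this] at hdvd
    have := (Nat.prime_five.dvd_of_dvd_pow hdvd2)
    omega
  -- now c ∈ {1,2,3,4}
  have hcge : 1 ≤ c := Nat.one_le_iff_ne_zero.mpr hc0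
  interval_cases c
  · left; omega
  · right; left; omega
  · -- c = 3 : q = 9, q + 1 = 10 = 2^a * 3^b impossible
    exfalso
    have h10 : (2:ℕ) ^ a * 3 ^ b = 10 := by rw [← h2']; norm_num
    have h5d : (5:ℕ) ∣ 2 ^ a * 3 ^ b := by rw [h10]; norm_num
    rcases (Nat.Prime.dvd_mul Nat.prime_five).mp h5d with h | h
    · have := Nat.prime_five.dvd_of_dvd_pow h; omega
    · have := Nat.prime_five.dvd_of_dvd_pow h; omega
  · right; right; omega
end

section
/- Let q = p^f for a prime p and positive integer f. If q - 1 = 2^a * 5^b for a positive integer a and nonnegative integer b, and q + 1 = 2^c for a nonnegative integer c, then q = 3. -/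
theorem stmt_2 (p f a b c q : ℕ) (hp : p.Prime) (hf : 1 ≤ f) (hq : q = p ^ f)
    (ha : 1 ≤ a) (h1 : q - 1 = 2 ^ a * 5 ^ b) (h2 : q + 1 = 2 ^ c) :
    q = 3 := by
  have hp2 := hp.two_le
  have hq2 : 2 ≤ q := hq ▸ le_trans hp2 (Nat.le_self_pow (by omega) p)
  have h5 : 1 ≤ 5 ^ b := Nat.one_le_pow _ _ (by norm_num)
  obtain ⟨a', rfl⟩ : ∃ a', a = a' + 1 := ⟨a - 1, by omega⟩
  have h2a : 1 ≤ 2 ^ a' := Nat.one_le_pow _ _ (by norm_num)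
  have hc : 2 * (2 ^ a' * 5 ^ b) + 2 = 2 ^ c := by
    have : q = 2 ^ (a' + 1) * 5 ^ b + 1 := by omega
    rw [pow_succ] at this; rw [← h2, this]; ring
  have hcge : 2 ≤ c := by
    by_contra h
    interval_cases c <;> nlinarith
  obtain ⟨c', rfl⟩ : ∃ c', c = c' + 2 := ⟨c - 2, by omega⟩
  have h2c : 1 ≤ 2 ^ c' := Nat.one_le_pow _ _ (by norm_num)
  rw [pow_add] at hc
  have hc' : 2 ^ a' * 5 ^ b + 1 = 2 * 2 ^ c' := by nlinarith
  have ha0 : a' = 0 := by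
    by_contra h
    obtain ⟨a'', rfl⟩ : ∃ a'', a' = a'' + 1 := ⟨a' - 1, by omega⟩
    rw [pow_succ] at hc'
    have h' : 2 * (2 ^ a'' * 5 ^ b) + 1 = 2 * 2 ^ c' := by rw [← hc']; ring
    omega
  subst ha0
  simp only [pow_zero, one_mul] at hc'
  have hb0 : b = 0 := by
    by_contra hb
    have h5b : 5 ≤ 5 ^ b := Nat.le_self_pow hb 5
    have hcge2 : 2 ≤ c' := by
      by_contra h
      interval_cases c' <;> omega
    obtain ⟨c'', rfl⟩ : ∃ c'', c' = c'' + 2 := ⟨c' - 2, by omega⟩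
    rw [pow_add] at hc'
    have hmod : 5 ^ b % 4 = 1 := by
      rw [Nat.pow_mod]; norm_num
    omega
  subst hb0
  simp only [pow_zero] at hc'
  have : 2 ^ c' = 1 := by omega
  have hq3 : q + 1 = 2 ^ (c' + 2) := h2
  rw [pow_add, this] at hq3
  norm_num at hq3
  omega
end

section
/- If b and c are positive integers with 3^b - 1 = 2^c, then b = 1 or b = 2 (equivalently, 3^b ∈ {3, 9}). -/
lemma pow3mod8 (k : ℕ) : 3 ^ k % 8 = 1 ∨ 3 ^ k % 8 = 3 := by
  induction k with
  | zero => simp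
  | succ n ih =>
    rw [pow_succ, Nat.mul_mod]
    rcases ih with h | h <;> simp [h]

lemma pow3even (k : ℕ) : 3 ^ (2 * k) % 8 = 1 := by
  induction k with
  | zero => simp
  | succ n ih =>
    have : 2 * (n + 1) = 2 * n + 2 := by ring
    rw [this, pow_add, Nat.mul_mod, ih]; norm_num

theorem stmt_3 (b c : ℕ) (hb : 1 ≤ b) (hc : 1 ≤ c) (h : 3 ^ b - 1 = 2 ^ c) :
    b = 1 ∨ b = 2 := by
  have h1 : 1 ≤ 3 ^ b := Nat.one_le_pow _ _ (by norm_num)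
  have h3 : 3 ^ b = 2 ^ c + 1 := by omega
  by_contra hcon
  push_neg at hcon
  have hb3 : 3 ≤ b := by omega
  rcases Nat.even_or_odd b with he | ho
  · obtain ⟨k, hk⟩ := he
    have hk2 : 2 ≤ k := by omega
    have h9 : 9 ≤ 3 ^ k := by
      calc (9 : ℕ) = 3 ^ 2 := by norm_num
      _ ≤ 3 ^ k := Nat.pow_le_pow_right (by norm_num) hk2
    obtain ⟨y, hy⟩ : ∃ y, 3 ^ k = y + 1 := ⟨3 ^ k - 1, by omega⟩
    have hsq : 3 ^ b = (3 ^ k) * (3 ^ k) := by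
      rw [hk, ← pow_add]
    have hdvd : (3 ^ k + 1) ∣ 2 ^ c := by
      refine ⟨y, ?_⟩
      have : (y + 1) * (y + 1) = 2 ^ c + 1 := by rw [← hy, ← hsq]; omega
      nlinarith
    obtain ⟨d, hdle, hd⟩ := (Nat.dvd_prime_pow Nat.prime_two).mp hdvd
    have hd4 : 4 ≤ d := by
      by_contra hd4
      push_neg at hd4
      have : 2 ^ d ≤ 2 ^ 3 := Nat.pow_le_pow_right (by norm_num) (by omega)
      norm_num at this; omega
    have h8 : (8 : ℕ) ∣ 2 ^ d := by
      have : (2 : ℕ) ^ 3 ∣ 2 ^ d := pow_dvd_pow 2 (by omega)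
      norm_num at this; exact this
    rcases pow3mod8 k with hm | hm <;> omega
  · obtain ⟨k, hk⟩ := ho
    have hmod : 3 ^ b % 8 = 3 := by
      rw [hk, pow_add, Nat.mul_mod, pow3even]; norm_num
    have h27 : 27 ≤ 3 ^ b := by
      calc (27 : ℕ) = 3 ^ 3 := by norm_num
      _ ≤ 3 ^ b := Nat.pow_le_pow_right (by norm_num) hb3
    have hc5 : 5 ≤ c := by
      by_contra hc5
      push_neg at hc5
      have : 2 ^ c ≤ 2 ^ 4 := Nat.pow_le_pow_right (by norm_num) (by omega)
      norm_num at this; omega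
    have h8 : (8 : ℕ) ∣ 2 ^ c := by
      have : (2 : ℕ) ^ 3 ∣ 2 ^ c := pow_dvd_pow 2 (by omega)
      norm_num at this; exact this
    omega
end

section
/- If c and a are positive integers with 5^c - 1 = 2^a, then c = 1. -/
/-!
Write `5 ^ c = 2 ^ a + 1`. If `c` is even then `24 = 5 ^ 2 - 1` divides `5 ^ c - 1 = 2 ^ a`, which
is absurd since `3 ∤ 2 ^ a`. If `c` is odd then `5 ^ c ≡ 5 [MOD 8]`, so `2 ^ a ≡ 4 [MOD 8]`, which
forces `a = 2` and hence `5 ^ c = 5`.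
-/

lemma five_pow_mod_eight_of_odd {c : ℕ} (hc : Odd c) : 5 ^ c % 8 = 5 := by
  obtain ⟨k, rfl⟩ := hc
  rw [pow_succ, pow_mul, Nat.mul_mod, Nat.pow_mod]
  norm_num

lemma twenty_four_dvd_five_pow_sub_one_of_even {c : ℕ} (hc : Even c) : 24 ∣ 5 ^ c - 1 := by
  obtain ⟨k, rfl⟩ := hc
  rw [← two_mul, pow_mul, show 24 = 5 ^ 2 - 1 by norm_num]
  simpa only [one_pow] using Nat.sub_dvd_pow_sub_pow (5 ^ 2) 1 k

lemma eq_two_of_two_pow_mod_eight_eq_four {a : ℕ} (ha : 2 ^ a % 8 = 4) : a = 2 := by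
  rcases lt_or_ge a 3 with ha3 | ha3
  · interval_cases a <;> simp_all
  · obtain ⟨b, rfl⟩ := Nat.exists_eq_add_of_le ha3
    simp [pow_add] at ha

lemma not_three_dvd_two_pow (a : ℕ) : ¬ 3 ∣ 2 ^ a := fun h ↦
  absurd (Nat.prime_three.dvd_of_dvd_pow h) (by norm_num)

theorem stmt_4_general (c a : ℕ) (h : 5 ^ c - 1 = 2 ^ a) :
    c = 1 := by
  have hpow : 5 ^ c = 2 ^ a + 1 := by
    have := Nat.one_le_pow c 5 (by norm_num)
    omega
  rcases Nat.even_or_odd c with hc | hc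
  · have h24 := twenty_four_dvd_five_pow_sub_one_of_even hc
    rw [h] at h24
    exact absurd (dvd_trans (by norm_num) h24) (not_three_dvd_two_pow a)
  · have ha : a = 2 := by
      have := five_pow_mod_eight_of_odd hc
      exact eq_two_of_two_pow_mod_eight_eq_four (by omega)
    subst ha
    exact Nat.pow_right_injective (by norm_num) (by simpa using hpow : 5 ^ c = 5 ^ 1)

theorem stmt_4 (c a : ℕ) (hc : 1 ≤ c) (ha : 1 ≤ a) (h : 5 ^ c - 1 = 2 ^ a) :
    c = 1 :=
  stmt_4_general c a h
end

section
/- Let G be a finite group and χ an irreducible complex character of G whose degree χ(1) is divisible by some prime. Then there exists g ∈ G with χ(g) = 0. -/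
/-!
Suppose `χ` vanishes nowhere. Its values lie in `ℚ(ζ)` for a primitive `|G|`-th root of unity `ζ`,
and the automorphism `ζ ↦ ζ ^ a` sends `χ g` to `χ (g ^ a)`. As `g ↦ g ^ a` permutes `G ∖ {1}`,
the product `∏_{g ≠ 1} χ g` is a Galois-invariant nonzero algebraic integer, hence a nonzero
rational integer, so `∏_{g ≠ 1} |χ g|² ≥ 1`. By AM–GM, `∑_{g ≠ 1} |χ g|² ≥ |G| - 1`, whereas
orthogonality gives `∑_{g ≠ 1} |χ g|² = |G| - χ(1)² < |G| - 1` as `χ(1) > 1`.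
-/

open Polynomial Finset

namespace Lagrange

variable {F ι : Type*} [Field F] [DecidableEq ι] {s : Finset ι} {v : ι → F} {i j : ι}

theorem basis_eq_C_nodalWeight_mul_nodal_erase :
    Lagrange.basis s v i = C (nodalWeight s v i) * nodal (s.erase i) v := by
  simp_rw [Lagrange.basis, basisDivisor, nodalWeight, prod_mul_distrib, map_prod, nodal]

theorem nodal_dvd_X_sub_C_mul_basis (hi : i ∈ s) :
    nodal s v ∣ (X - C (v i)) * Lagrange.basis s v i :=
  ⟨C (nodalWeight s v i), by
    rw [basis_eq_C_nodalWeight_mul_nodal_erase, nodal_eq_mul_nodal_erase hi]; ring⟩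

theorem nodal_dvd_basis_mul_basis (hj : j ∈ s) (hij : i ≠ j) :
    nodal s v ∣ Lagrange.basis s v i * Lagrange.basis s v j := by
  refine ⟨C (nodalWeight s v i) * C (nodalWeight s v j) * nodal ((s.erase i).erase j) v, ?_⟩
  rw [basis_eq_C_nodalWeight_mul_nodal_erase, basis_eq_C_nodalWeight_mul_nodal_erase,
    nodal_eq_mul_nodal_erase (mem_erase.mpr ⟨hij.symm, hj⟩), nodal_eq_mul_nodal_erase hj]
  ring

end Lagrange

namespace Module.End

variable {K W ι : Type*} [Field K] [AddCommGroup W] [Module K W] [FiniteDimensional K W]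

theorem exists_trace_pow_eq_sum_of_orthogonal_idempotents {s : Finset ι} {P : ι → Module.End K W}
    (hsum : ∑ i ∈ s, P i = 1) (horth : ∀ i ∈ s, ∀ j ∈ s, i ≠ j → P i * P j = 0)
    {E : Module.End K W} {v : ι → K} (hEP : ∀ i ∈ s, E * P i = v i • P i) :
    ∃ m : ι → ℕ, ∀ k : ℕ, LinearMap.trace K W (E ^ k) = ∑ i ∈ s, (m i : K) * v i ^ k := by
  have hidem (i : ι) (hi : i ∈ s) : IsIdempotentElem (P i) := by
    have := congrArg (P i * ·) hsum
    simp only [mul_sum, mul_one] at this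
    rwa [sum_eq_single_of_mem i hi fun j hj hji => horth i hi j hj hji.symm] at this
  have hpow (k : ℕ) (i : ι) (hi : i ∈ s) : E ^ k * P i = v i ^ k • P i := by
    induction k with
    | zero => simp
    | succ k ih => rw [pow_succ', mul_assoc, ih, mul_smul_comm, hEP i hi, smul_smul, pow_succ]
  refine ⟨fun i => finrank K (LinearMap.range (P i)), fun k => ?_⟩
  calc LinearMap.trace K W (E ^ k) = LinearMap.trace K W (∑ i ∈ s, E ^ k * P i) := by
        rw [← mul_sum, hsum, mul_one]
    _ = ∑ i ∈ s, (finrank K (LinearMap.range (P i)) : K) * v i ^ k := by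
        rw [map_sum]
        refine sum_congr rfl fun i hi => ?_
        rw [hpow k i hi, map_smul, (LinearMap.IsIdempotentElem.isProj_range _ (hidem i hi)).trace,
          smul_eq_mul, mul_comm]

/-- The Lagrange basis polynomials of the nodes `v i`, evaluated at `E`, are orthogonal idempotents
summing to `1`, and `E` acts on the image of the `i`-th one as `v i`. -/
theorem exists_trace_pow_eq_sum_of_aeval_nodal_eq_zero {s : Finset ι} {v : ι → K}
    (hvs : Set.InjOn v s) {E : Module.End K W} (hE : aeval E (Lagrange.nodal s v) = 0) :
    ∃ m : ι → ℕ, ∀ k : ℕ, LinearMap.trace K W (E ^ k) = ∑ i ∈ s, (m i : K) * v i ^ k := by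
  classical
  rcases s.eq_empty_or_nonempty with rfl | hs
  · have : Subsingleton (Module.End K W) := subsingleton_of_zero_eq_one (by simpa using hE.symm)
    exact ⟨0, fun k => by simp [Subsingleton.elim (E ^ k) 0]⟩
  have hdvd {p : K[X]} (hp : Lagrange.nodal s v ∣ p) : aeval E p = 0 := by
    obtain ⟨q, rfl⟩ := hp
    rw [map_mul, hE, zero_mul]
  refine exists_trace_pow_eq_sum_of_orthogonal_idempotents
    (P := fun i => aeval E (Lagrange.basis s v i))
    (by rw [← map_sum, Lagrange.sum_basis hvs hs, map_one])
    (fun i _ j hj hij => by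
      rw [← map_mul]; exact hdvd (Lagrange.nodal_dvd_basis_mul_basis hj hij))
    (fun i hi => ?_)
  have := hdvd (Lagrange.nodal_dvd_X_sub_C_mul_basis (v := v) hi)
  rwa [map_mul, map_sub, aeval_X, aeval_C, Algebra.algebraMap_eq_smul_one, sub_mul,
    smul_mul_assoc, one_mul, sub_eq_zero] at this

theorem exists_trace_pow_eq_sum_of_pow_eq_one {n : ℕ} [NeZero n] {ζ : K}
    (hζ : IsPrimitiveRoot ζ n) {E : Module.End K W} (hE : E ^ n = 1) :
    ∃ m : ℕ → ℕ, ∀ k : ℕ,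
      LinearMap.trace K W (E ^ k) = ∑ j ∈ range n, (m j : K) * (ζ ^ j) ^ k := by
  refine exists_trace_pow_eq_sum_of_aeval_nodal_eq_zero hζ.injOn_pow ?_
  have hprod := X_pow_sub_C_eq_prod hζ (NeZero.pos n) (one_pow n)
  simp only [mul_one, map_one] at hprod
  rw [Lagrange.nodal, ← hprod, map_sub, map_pow, aeval_X, hE, map_one, sub_self]

end Module.End

theorem Finset.prod_erase_one_comp_pow_coprime {G M : Type*} [Group G] [Fintype G] [DecidableEq G]
    [CommMonoid M] (f : G → M) {a : ℕ} (ha : (Nat.card G).Coprime a) :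
    ∏ g ∈ univ.erase 1, f (g ^ a) = ∏ g ∈ univ.erase 1, f g :=
  prod_equiv (powCoprime ha)
    (fun g => by
      simp only [mem_erase, mem_univ, and_true]
      exact ((powCoprime ha).injective.ne_iff' (one_pow a)).symm)
    fun _ _ => rfl

theorem Finset.card_le_sum_of_one_le_prod {ι : Type*} {s : Finset ι} {x : ι → ℝ}
    (hx : ∀ i ∈ s, 0 ≤ x i) (h : 1 ≤ ∏ i ∈ s, x i) : (#s : ℝ) ≤ ∑ i ∈ s, x i := by
  rcases s.eq_empty_or_nonempty with rfl | hs
  · simp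
  have hcard : (0 : ℝ) < #s := by exact_mod_cast hs.card_pos
  have amgm := Real.geom_mean_le_arith_mean s 1 x (fun _ _ => zero_le_one) (by simpa using hcard) hx
  simp only [Pi.one_apply, Real.rpow_one, sum_const, nsmul_eq_mul, mul_one, one_mul] at amgm
  rw [le_div_iff₀ hcard] at amgm
  nlinarith [Real.one_le_rpow h (inv_nonneg.mpr hcard.le)]

theorem IsGalois.exists_intCast_eq_of_isIntegral {L : Type*} [Field L] [Algebra ℚ L]
    [FiniteDimensional ℚ L] [IsGalois ℚ L] {y : L} (hint : IsIntegral ℤ y)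
    (hfix : ∀ σ : L ≃ₐ[ℚ] L, σ y = y) : ∃ z : ℤ, y = z := by
  obtain ⟨q, rfl⟩ := IntermediateField.mem_bot.mp ((IsGalois.mem_bot_iff_fixed y).mpr hfix)
  obtain ⟨z, rfl⟩ := IsIntegrallyClosed.isIntegral_iff.mp
    ((isIntegral_algebraMap_iff (algebraMap ℚ L).injective).mp hint)
  exact ⟨z, by simp⟩

namespace FDRep

open ComplexConjugate

theorem exists_character_pow_eq_sum {K G : Type*} [Field K] [Group G] [Finite G] (V : FDRep K G)
    {ζ : K} (hζ : IsPrimitiveRoot ζ (Nat.card G)) (g : G) :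
    ∃ m : ℕ → ℕ, ∀ k : ℕ,
      V.character (g ^ k) = ∑ j ∈ range (Nat.card G), (m j : K) * (ζ ^ j) ^ k := by
  simp only [character, map_pow]
  exact Module.End.exists_trace_pow_eq_sum_of_pow_eq_one hζ
    (by rw [← map_pow, pow_card_eq_one', map_one])

variable {G : Type} [Group G]

theorem character_inv [Finite G] (V : FDRep ℂ G) (g : G) :
    V.character g⁻¹ = conj (V.character g) := by
  have hn := Nat.card_pos (α := G)
  have hζ := Complex.isPrimitiveRoot_exp (Nat.card G) hn.ne'
  set ζ := Complex.exp (2 * Real.pi * Complex.I / Nat.card G)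
  obtain ⟨m, hm⟩ := V.exists_character_pow_eq_sum hζ g
  have hinv (j : ℕ) : (ζ ^ j) ^ (Nat.card G - 1) = conj (ζ ^ j) := by
    have hnorm : ‖ζ ^ j‖ = 1 := by rw [norm_pow, hζ.norm'_eq_one hn.ne', one_pow]
    have hpow : (ζ ^ j) ^ Nat.card G = 1 := by
      rw [← pow_mul, mul_comm, pow_mul, hζ.pow_eq_one, one_pow]
    rw [pow_sub₀ _ (norm_ne_zero_iff.mp (hnorm ▸ one_ne_zero)) hn, hpow, pow_one, one_mul,
      Complex.inv_eq_conj hnorm]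
  calc V.character g⁻¹ = V.character (g ^ (Nat.card G - 1)) := by
        rw [pow_sub g hn, pow_card_eq_one', pow_one, one_mul]
    _ = ∑ j ∈ range (Nat.card G), (m j : ℂ) * conj (ζ ^ j) := by simp only [hm, hinv]
    _ = conj (V.character g) := by
        rw [← pow_one g, hm, map_sum]
        simp only [pow_one, map_mul, map_natCast]

theorem sum_normSq_character [Fintype G] (V : FDRep ℂ G) [CategoryTheory.Simple V] :
    ∑ g, Complex.normSq (V.character g) = Nat.card G := by
  have := (simple_iff_char_is_norm_one V).mp inferInstance
  simp only [character_inv, Complex.mul_conj] at this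
  exact_mod_cast this

theorem exists_lift_character [Finite G] (V : FDRep ℂ G) {L : Type*} [Field L] {ζ : L}
    (hζ : IsPrimitiveRoot ζ (Nat.card G)) (φ : L →+* ℂ) :
    ∃ c : G → L, (∀ g, φ (c g) = V.character g) ∧ (∀ g, IsIntegral ℤ (c g)) ∧
      ∀ {F : Type*} [FunLike F L L] [RingHomClass F L L] (σ : F) (a : ℕ), σ ζ = ζ ^ a →
        ∀ g, σ (c g) = c (g ^ a) := by
  choose m hm using V.exists_character_pow_eq_sum (hζ.map_of_injective φ.injective)
  have hφ (g : G) (a : ℕ) :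
      φ (∑ j ∈ range (Nat.card G), (m g j : L) * (ζ ^ a) ^ j) = V.character (g ^ a) := by
    simp only [hm, map_sum, map_mul, map_natCast, map_pow, ← pow_mul, mul_comm a]
  refine ⟨fun g => ∑ j ∈ range (Nat.card G), (m g j : L) * ζ ^ j, fun g => ?_, fun g => ?_,
    fun σ a hσ g => φ.injective ?_⟩
  · simpa using hφ g 1
  · exact IsIntegral.sum _ fun j _ =>
      (isIntegral_natCast _).mul ((hζ.isIntegral Nat.card_pos).pow j)
  · have hσc : σ (∑ j ∈ range (Nat.card G), (m g j : L) * ζ ^ j)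
        = ∑ j ∈ range (Nat.card G), (m g j : L) * (ζ ^ a) ^ j := by
      simp only [map_sum, map_mul, map_natCast, map_pow, hσ]
    rw [hσc, hφ g a]
    simpa using (hφ (g ^ a) 1).symm

theorem exists_prod_erase_one_character_eq_intCast [Fintype G] [DecidableEq G] (V : FDRep ℂ G) :
    ∃ z : ℤ, ∏ g ∈ univ.erase 1, V.character g = z := by
  have : NeZero (Nat.card G) := ⟨Nat.card_pos.ne'⟩
  have : IsCyclotomicExtension {Nat.card G} ℚ (CyclotomicField (Nat.card G) ℚ) :=
    CyclotomicField.isCyclotomicExtension _ _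
  have := IsCyclotomicExtension.isGalois {Nat.card G} ℚ (CyclotomicField (Nat.card G) ℚ)
  have hζ := IsCyclotomicExtension.zeta_spec (Nat.card G) ℚ (CyclotomicField (Nat.card G) ℚ)
  let φ : CyclotomicField (Nat.card G) ℚ →ₐ[ℚ] ℂ := IsAlgClosed.lift
  obtain ⟨c, hφc, hint, hσc⟩ := V.exists_lift_character hζ φ.toRingHom
  obtain ⟨z, hz⟩ := IsGalois.exists_intCast_eq_of_isIntegral
    (IsIntegral.prod _ fun g _ => hint g) (y := ∏ g ∈ univ.erase 1, c g) fun σ => by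
      rw [map_prod]
      exact (prod_congr rfl fun g _ => hσc σ _ (hζ.autToPow_spec ℚ σ).symm g).trans
        (prod_erase_one_comp_pow_coprime c (ZMod.val_coe_unit_coprime _).symm)
  refine ⟨z, ?_⟩
  simp only [← hφc, ← map_prod, hz, map_intCast]

end FDRep

theorem stmt_9 {G : Type} [Group G] [Fintype G] (V : FDRep ℂ G)
    (hirr : CategoryTheory.Simple V)
    (h : ∃ r : ℕ, r.Prime ∧ r ∣ Module.finrank ℂ V) :
    ∃ g : G, V.character g = 0 := by
  classical
  by_contra! hne
  obtain ⟨r, hr, hrd⟩ := h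
  have hd : 2 ≤ Module.finrank ℂ V := hr.two_le.trans <| Nat.le_of_dvd
    (Nat.pos_of_ne_zero fun h0 => hne 1 (by rw [FDRep.char_one, h0, Nat.cast_zero])) hrd
  obtain ⟨z, hz⟩ := V.exists_prod_erase_one_character_eq_intCast
  have hz0 : z ≠ 0 := by
    rintro rfl
    simp [prod_eq_zero_iff, hne] at hz
  have hprod : 1 ≤ ∏ g ∈ univ.erase 1, Complex.normSq (V.character g) := by
    rw [← map_prod, hz, Complex.normSq_intCast, ← Int.cast_mul, ← Int.cast_one, Int.cast_le]
    nlinarith [Int.one_le_abs hz0, abs_mul_abs_self z]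
  have hcard := card_le_sum_of_one_le_prod (fun g _ => Complex.normSq_nonneg _) hprod
  have hsum := V.sum_normSq_character
  rw [← add_sum_erase _ _ (mem_univ 1), FDRep.char_one, Complex.normSq_natCast] at hsum
  rw [card_erase_of_mem (mem_univ 1), card_univ, ← Nat.card_eq_fintype_card,
    Nat.cast_sub Nat.card_pos, Nat.cast_one] at hcard
  have hd' : (2 : ℝ) ≤ Module.finrank ℂ V := by exact_mod_cast hd
  nlinarith [mul_self_le_mul_self zero_le_two hd']
end
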